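/- arXiv:1410.5161 — 2 statements merged into one kernel-verified Lean document; each statement's English description precedes it below -/
import Mathlib

section
/- If (H, α, m, η, Δ, ε) is a monoidal Hom-bialgebra, then (H, α⁻¹∘m, η, Δ∘α, ε) is an ordinary bialgebra over k. -/
open TensorProduct

noncomputable section
namespace HomTwist

variable {k : Type*} [CommRing k]

section Defs
variable {H₁ H₂ A B : Type*} [AddCommGroup H₁] [Module k H₁] [AddCommGroup H₂] [Module k H₂]
  [AddCommGroup A] [Module k A] [AddCommGroup B] [Module k B]

/-- The componentwise "action" of `H₁ ⊗ H₂` on `A ⊗ B` induced by bilinear actions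
`f : H₁ → A → A` and `g : H₂ → B → B`:  `(h₁ ⊗ h₂) • (a ⊗ b) = (f h₁ a) ⊗ (g h₂ b)`. -/
def pairMap (f : H₁ →ₗ[k] A →ₗ[k] A) (g : H₂ →ₗ[k] B →ₗ[k] B) :
    (H₁ ⊗[k] H₂) →ₗ[k] (A ⊗[k] B) →ₗ[k] A ⊗[k] B :=
  TensorProduct.lift (((TensorProduct.mapBilinear (σ₁₂ := RingHom.id k) (M := A) (N := B) (M₂ := A) (N₂ := B)).comp f).compl₂ g)

end Defs

section Structures
variable {H : Type*} [AddCommGroup H] [Module k H]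

/-- Componentwise product on `H ⊗ H` induced by a bilinear multiplication on `H`. -/
def mulT (mul : H →ₗ[k] H →ₗ[k] H) : (H ⊗[k] H) →ₗ[k] (H ⊗[k] H) →ₗ[k] H ⊗[k] H :=
  pairMap mul mul

/-- Componentwise product on `H ⊗ (H ⊗ H)`. -/
def mulT3 (mul : H →ₗ[k] H →ₗ[k] H) :
    (H ⊗[k] (H ⊗[k] H)) →ₗ[k] (H ⊗[k] (H ⊗[k] H)) →ₗ[k] H ⊗[k] (H ⊗[k] H) :=
  pairMap mul (mulT mul)

/-- `(r ⊗ R) ↦ r⁽¹⁾ ⊗ (R⁽¹⁾ ⊗ r⁽²⁾R⁽²⁾)`. -/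
def hexA (mul : H →ₗ[k] H →ₗ[k] H) :
    ((H ⊗[k] H) ⊗[k] (H ⊗[k] H)) →ₗ[k] H ⊗[k] (H ⊗[k] H) :=
  (TensorProduct.assoc k H H H).toLinearMap
    ∘ₗ TensorProduct.map LinearMap.id (TensorProduct.lift mul)
    ∘ₗ (TensorProduct.tensorTensorTensorComm k H H H H).toLinearMap

/-- `(r ⊗ R) ↦ r⁽¹⁾R⁽¹⁾ ⊗ (R⁽²⁾ ⊗ r⁽²⁾)`. -/
def hexB (mul : H →ₗ[k] H →ₗ[k] H) :
    ((H ⊗[k] H) ⊗[k] (H ⊗[k] H)) →ₗ[k] H ⊗[k] (H ⊗[k] H) :=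
  TensorProduct.map (TensorProduct.lift mul) (TensorProduct.comm k H H).toLinearMap
    ∘ₗ (TensorProduct.tensorTensorTensorComm k H H H H).toLinearMap

/-- Axioms of a monoidal Hom-bialgebra (Caenepeel–Goyvaerts). -/
structure IsMonHomBialgebra (mul : H →ₗ[k] H →ₗ[k] H) (one : H) (alpha : H ≃ₗ[k] H)
    (comul : H →ₗ[k] H ⊗[k] H) (counit : H →ₗ[k] k) : Prop where
  alpha_mul : ∀ a b, alpha (mul a b) = mul (alpha a) (alpha b)
  hom_assoc : ∀ a b c, mul (alpha a) (mul b c) = mul (mul a b) (alpha c)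
  alpha_one : alpha one = one
  one_mul' : ∀ a, mul one a = alpha a
  mul_one' : ∀ a, mul a one = alpha a
  comul_alpha : ∀ c, comul (alpha c)
      = TensorProduct.map alpha.toLinearMap alpha.toLinearMap (comul c)
  hom_coassoc : ∀ c,
      TensorProduct.map alpha.symm.toLinearMap comul (comul c)
        = TensorProduct.assoc k H H H
            (TensorProduct.map comul alpha.symm.toLinearMap (comul c))
  counit_alpha : ∀ c, counit (alpha c) = counit c
  counit_id : ∀ c, TensorProduct.lid k H
      (TensorProduct.map counit LinearMap.id (comul c)) = alpha.symm c
  id_counit : ∀ c, TensorProduct.rid k H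
      (TensorProduct.map LinearMap.id counit (comul c)) = alpha.symm c
  comul_mul : ∀ a b, comul (mul a b) = mulT mul (comul a) (comul b)
  comul_one : comul one = one ⊗ₜ[k] one
  counit_mul : ∀ a b, counit (mul a b) = counit a * counit b
  counit_one : counit one = 1

/-- Axioms of a (Makhlouf–Silvestrov) Hom-bialgebra (with bijective structure map). -/
structure IsHomBialgebra (mul : H →ₗ[k] H →ₗ[k] H) (one : H) (alpha : H ≃ₗ[k] H)
    (comul : H →ₗ[k] H ⊗[k] H) (counit : H →ₗ[k] k) : Prop where
  alpha_mul : ∀ a b, alpha (mul a b) = mul (alpha a) (alpha b)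
  hom_assoc : ∀ a b c, mul (alpha a) (mul b c) = mul (mul a b) (alpha c)
  alpha_one : alpha one = one
  one_mul' : ∀ a, mul one a = alpha a
  mul_one' : ∀ a, mul a one = alpha a
  comul_alpha : ∀ c, comul (alpha c)
      = TensorProduct.map alpha.toLinearMap alpha.toLinearMap (comul c)
  hom_coassoc : ∀ c,
      TensorProduct.map alpha.toLinearMap comul (comul c)
        = TensorProduct.assoc k H H H
            (TensorProduct.map comul alpha.toLinearMap (comul c))
  counit_alpha : ∀ c, counit (alpha c) = counit c
  counit_id : ∀ c, TensorProduct.lid k H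
      (TensorProduct.map counit LinearMap.id (comul c)) = alpha c
  id_counit : ∀ c, TensorProduct.rid k H
      (TensorProduct.map LinearMap.id counit (comul c)) = alpha c
  comul_mul : ∀ a b, comul (mul a b) = mulT mul (comul a) (comul b)
  comul_one : comul one = one ⊗ₜ[k] one
  counit_mul : ∀ a b, counit (mul a b) = counit a * counit b
  counit_one : counit one = 1

/-- Axioms of an ordinary (possibly noncommutative) bialgebra, given by raw data. -/
structure IsBialgebra (mul : H →ₗ[k] H →ₗ[k] H) (one : H)
    (comul : H →ₗ[k] H ⊗[k] H) (counit : H →ₗ[k] k) : Prop where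
  assoc : ∀ a b c, mul (mul a b) c = mul a (mul b c)
  one_mul' : ∀ a, mul one a = a
  mul_one' : ∀ a, mul a one = a
  coassoc : ∀ c, TensorProduct.map LinearMap.id comul (comul c)
      = TensorProduct.assoc k H H H (TensorProduct.map comul LinearMap.id (comul c))
  counit_id : ∀ c, TensorProduct.lid k H
      (TensorProduct.map counit LinearMap.id (comul c)) = c
  id_counit : ∀ c, TensorProduct.rid k H
      (TensorProduct.map LinearMap.id counit (comul c)) = c
  comul_mul : ∀ a b, comul (mul a b) = mulT mul (comul a) (comul b)
  comul_one : comul one = one ⊗ₜ[k] one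
  counit_mul : ∀ a b, counit (mul a b) = counit a * counit b
  counit_one : counit one = 1

/-- A Drinfeld twist `σ` (with inverse `ϱ`) for a monoidal Hom-bialgebra. -/
structure IsTwist (mul : H →ₗ[k] H →ₗ[k] H) (one : H) (alpha : H ≃ₗ[k] H)
    (comul : H →ₗ[k] H ⊗[k] H) (counit : H →ₗ[k] k) (σ ϱ : H ⊗[k] H) : Prop where
  mul_inv : mulT mul σ ϱ = one ⊗ₜ[k] one
  inv_mul : mulT mul ϱ σ = one ⊗ₜ[k] one
  T1 : TensorProduct.map alpha.toLinearMap alpha.toLinearMap σ = σ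
  T2l : TensorProduct.lid k H (TensorProduct.map counit LinearMap.id σ) = one
  T2r : TensorProduct.rid k H (TensorProduct.map LinearMap.id counit σ) = one
  T3 : TensorProduct.map LinearMap.id (mulT mul σ)
        (TensorProduct.map LinearMap.id comul σ)
      = TensorProduct.assoc k H H H
          (TensorProduct.map (mulT mul σ) LinearMap.id
            (TensorProduct.map comul LinearMap.id σ))

/-- The `R`-matrix axioms (Q1)–(Q4) for a monoidal Hom-bialgebra. -/
structure IsRMatrix (mul : H →ₗ[k] H →ₗ[k] H) (alpha : H ≃ₗ[k] H)
    (comul : H →ₗ[k] H ⊗[k] H) (R : H ⊗[k] H) : Prop where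
  Q1 : TensorProduct.map alpha.toLinearMap alpha.toLinearMap R = R
  Q2 : ∀ h, mulT mul R (comul h)
      = mulT mul (TensorProduct.comm k H H (comul h)) R
  Q3 : TensorProduct.assoc k H H H (TensorProduct.map comul LinearMap.id R)
      = hexA mul (R ⊗ₜ[k] R)
  Q4 : TensorProduct.map LinearMap.id comul R = hexB mul (R ⊗ₜ[k] R)

/-- Axioms of a monoidal Hom-algebra. -/
structure IsMonHomAlgebra {A : Type*} [AddCommGroup A] [Module k A]
    (mul : A →ₗ[k] A →ₗ[k] A) (one : A) (alpha : A ≃ₗ[k] A) : Prop where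
  alpha_mul : ∀ a b, alpha (mul a b) = mul (alpha a) (alpha b)
  hom_assoc : ∀ a b c, mul (alpha a) (mul b c) = mul (mul a b) (alpha c)
  alpha_one : alpha one = one
  one_mul' : ∀ a, mul one a = alpha a
  mul_one' : ∀ a, mul a one = alpha a

/-- Axioms of a monoidal Hom-coalgebra. -/
structure IsMonHomCoalgebra {C : Type*} [AddCommGroup C] [Module k C]
    (comul : C →ₗ[k] C ⊗[k] C) (counit : C →ₗ[k] k) (alpha : C ≃ₗ[k] C) : Prop where
  comul_alpha : ∀ c, comul (alpha c)
      = TensorProduct.map alpha.toLinearMap alpha.toLinearMap (comul c)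
  hom_coassoc : ∀ c,
      TensorProduct.map alpha.symm.toLinearMap comul (comul c)
        = TensorProduct.assoc k C C C
            (TensorProduct.map comul alpha.symm.toLinearMap (comul c))
  counit_alpha : ∀ c, counit (alpha c) = counit c
  counit_id : ∀ c, TensorProduct.lid k C
      (TensorProduct.map counit LinearMap.id (comul c)) = alpha.symm c
  id_counit : ∀ c, TensorProduct.rid k C
      (TensorProduct.map LinearMap.id counit (comul c)) = alpha.symm c

/-- Axioms of a left `H`-Hom-module. -/
structure IsHomModule {M : Type*} [AddCommGroup M] [Module k M]
    (mul : H →ₗ[k] H →ₗ[k] H) (one : H) (alpha : H ≃ₗ[k] H)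
    (alM : M ≃ₗ[k] M) (act : H →ₗ[k] M →ₗ[k] M) : Prop where
  compat : ∀ h m, alM (act h m) = act (alpha h) (alM m)
  hom_smul : ∀ h h' m, act (alpha h) (act h' m) = act (mul h h') (alM m)
  one_smul' : ∀ m, act one m = alM m

/-- The twisted coproduct `Δᵠ(x) = (σ Δ(x)) ϱ`. -/
def twistComul (mul : H →ₗ[k] H →ₗ[k] H) (comul : H →ₗ[k] H ⊗[k] H)
    (σ ϱ : H ⊗[k] H) : H →ₗ[k] H ⊗[k] H :=
  ((mulT mul).flip ϱ) ∘ₗ (mulT mul σ) ∘ₗ comul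

end Structures
end HomTwist
end

/-!
Write `m' = α⁻¹ ∘ m` and `Δ' = Δ ∘ α`. As `α` is multiplicative, so is `α⁻¹`, and Hom-associativity
`α(a)(bc) = (ab)α(c)` evaluated at `α⁻¹a, α⁻¹b, α⁻¹c` is associativity of `m'`; the unit axioms
`1a = a1 = α(a)` become `m'(1, a) = m'(a, 1) = a`. Dually `Δ' = (α ⊗ α) ∘ Δ`, so the two sides of
coassociativity of `Δ'` are `α² ⊗ α² ⊗ α²` applied to the two sides of Hom-coassociativity, and
`ε ∘ α = ε` turns the Hom-counit axioms `(ε ⊗ id) Δ = α⁻¹` into `(ε ⊗ id) Δ' = id`. Finally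
`Δ'(m'(a, b)) = Δ(ab)`, and `α ⊗ α` carries the componentwise product of `m` to that of `m'`.
-/

namespace HomTwist
open TensorProduct

section
variable {k : Type*} [CommRing k]

namespace IsMonHomAlgebra
variable {A : Type*} [AddCommGroup A] [Module k A] {mul : A →ₗ[k] A →ₗ[k] A} {one : A}
  {alpha : A ≃ₗ[k] A}

theorem symm_mul (hA : IsMonHomAlgebra mul one alpha) (a b : A) :
    alpha.symm (mul a b) = mul (alpha.symm a) (alpha.symm b) := by
  rw [alpha.symm_apply_eq, hA.alpha_mul, alpha.apply_symm_apply, alpha.apply_symm_apply]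

theorem untwist_assoc (hA : IsMonHomAlgebra mul one alpha) (a b c : A) :
    mul.compr₂ alpha.symm.toLinearMap (mul.compr₂ alpha.symm.toLinearMap a b) c
      = mul.compr₂ alpha.symm.toLinearMap a (mul.compr₂ alpha.symm.toLinearMap b c) := by
  simp only [LinearMap.compr₂_apply, LinearEquiv.coe_coe]
  rw [hA.symm_mul a b, hA.symm_mul b c]
  simpa only [alpha.apply_symm_apply] using
    congrArg alpha.symm (hA.hom_assoc (alpha.symm a) (alpha.symm b) (alpha.symm c)).symm

theorem untwist_one_mul (hA : IsMonHomAlgebra mul one alpha) (a : A) :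
    mul.compr₂ alpha.symm.toLinearMap one a = a := by
  simp [hA.one_mul']

theorem untwist_mul_one (hA : IsMonHomAlgebra mul one alpha) (a : A) :
    mul.compr₂ alpha.symm.toLinearMap a one = a := by
  simp [hA.mul_one']

theorem mulT_untwist_map_alpha (hA : IsMonHomAlgebra mul one alpha) (X Y : A ⊗[k] A) :
    mulT (mul.compr₂ alpha.symm.toLinearMap) (map alpha.toLinearMap alpha.toLinearMap X)
      (map alpha.toLinearMap alpha.toLinearMap Y) = mulT mul X Y := by
  induction X using TensorProduct.induction_on with
  | zero => simp
  | add X₁ X₂ h₁ h₂ => simp only [map_add, LinearMap.add_apply, h₁, h₂]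
  | tmul a b =>
    induction Y using TensorProduct.induction_on with
    | zero => simp
    | add Y₁ Y₂ h₁ h₂ => simp only [map_add, h₁, h₂]
    | tmul c d => simp [mulT, pairMap, ← hA.alpha_mul]

end IsMonHomAlgebra

namespace IsMonHomCoalgebra
variable {C : Type*} [AddCommGroup C] [Module k C] {comul : C →ₗ[k] C ⊗[k] C}
  {counit : C →ₗ[k] k} {alpha : C ≃ₗ[k] C}

theorem counit_comp_alpha (hC : IsMonHomCoalgebra comul counit alpha) :
    counit ∘ₗ alpha.toLinearMap = counit :=
  LinearMap.ext hC.counit_alpha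

theorem counit_symm (hC : IsMonHomCoalgebra comul counit alpha) (c : C) :
    counit (alpha.symm c) = counit c := by
  rw [← hC.counit_alpha, alpha.apply_symm_apply]

theorem untwist_coassoc (hC : IsMonHomCoalgebra comul counit alpha) (c : C) :
    map LinearMap.id (comul ∘ₗ alpha.toLinearMap) ((comul ∘ₗ alpha.toLinearMap) c)
      = TensorProduct.assoc k C C C
          (map (comul ∘ₗ alpha.toLinearMap) LinearMap.id ((comul ∘ₗ alpha.toLinearMap) c)) := by
  set α₂ : C →ₗ[k] C := (alpha.trans alpha).toLinearMap
  have h_comul : (comul ∘ₗ alpha.toLinearMap) ∘ₗ alpha.toLinearMap = map α₂ α₂ ∘ₗ comul := by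
    ext x
    simp [α₂, hC.comul_alpha, map_map]
  have h_id : LinearMap.id ∘ₗ alpha.toLinearMap = α₂ ∘ₗ alpha.symm.toLinearMap := by
    ext x
    simp [α₂]
  rw [LinearMap.comp_apply, LinearEquiv.coe_coe, hC.comul_alpha, map_map, map_map, h_comul,
    h_id, ← map_map α₂ (map α₂ α₂), ← map_map (map α₂ α₂) α₂, ← map_map_assoc, ← hC.hom_coassoc]

theorem untwist_counit_id (hC : IsMonHomCoalgebra comul counit alpha) (c : C) :
    TensorProduct.lid k C (map counit LinearMap.id ((comul ∘ₗ alpha.toLinearMap) c)) = c := by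
  rw [LinearMap.comp_apply, LinearEquiv.coe_coe, hC.comul_alpha, map_map, hC.counit_comp_alpha,
    LinearMap.id_comp, ← LinearEquiv.coe_coe, ← LinearMap.comp_apply,
    CoassocSimps.lid_comp_map]
  simp only [LinearMap.comp_apply, LinearEquiv.coe_coe, hC.counit_id, alpha.apply_symm_apply]

theorem untwist_id_counit (hC : IsMonHomCoalgebra comul counit alpha) (c : C) :
    TensorProduct.rid k C (map LinearMap.id counit ((comul ∘ₗ alpha.toLinearMap) c)) = c := by
  rw [LinearMap.comp_apply, LinearEquiv.coe_coe, hC.comul_alpha, map_map, hC.counit_comp_alpha,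
    LinearMap.id_comp, ← LinearEquiv.coe_coe, ← LinearMap.comp_apply,
    CoassocSimps.rid_comp_map]
  simp only [LinearMap.comp_apply, LinearEquiv.coe_coe, hC.id_counit, alpha.apply_symm_apply]

end IsMonHomCoalgebra

namespace IsMonHomBialgebra
variable {H : Type*} [AddCommGroup H] [Module k H] {mul : H →ₗ[k] H →ₗ[k] H} {one : H}
  {alpha : H ≃ₗ[k] H} {comul : H →ₗ[k] H ⊗[k] H} {counit : H →ₗ[k] k}

theorem toIsMonHomAlgebra (hH : IsMonHomBialgebra mul one alpha comul counit) :
    IsMonHomAlgebra mul one alpha :=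
  ⟨hH.alpha_mul, hH.hom_assoc, hH.alpha_one, hH.one_mul', hH.mul_one'⟩

theorem toIsMonHomCoalgebra (hH : IsMonHomBialgebra mul one alpha comul counit) :
    IsMonHomCoalgebra comul counit alpha :=
  ⟨hH.comul_alpha, hH.hom_coassoc, hH.counit_alpha, hH.counit_id, hH.id_counit⟩

theorem untwist_comul_mul (hH : IsMonHomBialgebra mul one alpha comul counit) (a b : H) :
    (comul ∘ₗ alpha.toLinearMap) (mul.compr₂ alpha.symm.toLinearMap a b)
      = mulT (mul.compr₂ alpha.symm.toLinearMap) ((comul ∘ₗ alpha.toLinearMap) a)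
          ((comul ∘ₗ alpha.toLinearMap) b) := by
  simp only [LinearMap.comp_apply, LinearMap.compr₂_apply, LinearEquiv.coe_coe,
    alpha.apply_symm_apply, hH.comul_alpha, hH.toIsMonHomAlgebra.mulT_untwist_map_alpha,
    hH.comul_mul]

theorem untwist_comul_one (hH : IsMonHomBialgebra mul one alpha comul counit) :
    (comul ∘ₗ alpha.toLinearMap) one = one ⊗ₜ[k] one := by
  rw [LinearMap.comp_apply, LinearEquiv.coe_coe, hH.alpha_one, hH.comul_one]

theorem untwist_counit_mul (hH : IsMonHomBialgebra mul one alpha comul counit) (a b : H) :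
    counit (mul.compr₂ alpha.symm.toLinearMap a b) = counit a * counit b := by
  rw [LinearMap.compr₂_apply, LinearEquiv.coe_coe, hH.toIsMonHomCoalgebra.counit_symm,
    hH.counit_mul]

end IsMonHomBialgebra

end

/-- If `(H, α, m, η, Δ, ε)` is a monoidal Hom-bialgebra, then
`(H, α⁻¹∘m, η, Δ∘α, ε)` is an ordinary bialgebra over `k`. -/
theorem monoidal_hom_bialgebra_untwist_is_bialgebra
    {k H : Type*} [CommRing k] [AddCommGroup H] [Module k H]
    (mul : H →ₗ[k] H →ₗ[k] H) (one : H) (alpha : H ≃ₗ[k] H)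
    (comul : H →ₗ[k] H ⊗[k] H) (counit : H →ₗ[k] k)
    (hH : IsMonHomBialgebra mul one alpha comul counit) :
    IsBialgebra (mul.compr₂ alpha.symm.toLinearMap) one
      (comul ∘ₗ alpha.toLinearMap) counit :=
  have hA := hH.toIsMonHomAlgebra
  have hC := hH.toIsMonHomCoalgebra
  { assoc := hA.untwist_assoc
    one_mul' := hA.untwist_one_mul
    mul_one' := hA.untwist_mul_one
    coassoc := hC.untwist_coassoc
    counit_id := hC.untwist_counit_id
    id_counit := hC.untwist_id_counit
    comul_mul := hH.untwist_comul_mul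
    comul_one := hH.untwist_comul_one
    counit_mul := hH.untwist_counit_mul
    counit_one := hH.counit_one }

end HomTwist
end

section
/- Let (H, α, m, η, Δ, ε, S) be a Hom-Hopf algebra with α invertible. Then the antipode S is anti-multiplicative: S(ab) = S(b)S(a) for all a, b ∈ H, and S(1_H) = 1_H. -/
open TensorProduct

/-!
Since `α` is invertible, Yau's untwisting turns `(H, α⁻¹ ∘ m, Δ ∘ α⁻¹, ε)` into an ordinary
bialgebra, and since `S` commutes with `α` it is still an antipode there. Antipodes of ordinary
bialgebras are anti-multiplicative and unital, and `S (α⁻¹ (a b)) = α⁻¹ (S b S a)` gives back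
the Hom-version.
-/

namespace HomTwist
open TensorProduct

section

variable {k H : Type*} [CommRing k] [AddCommGroup H] [Module k H]

structure IsAntipode (mul : H →ₗ[k] H →ₗ[k] H) (one : H) (comul : H →ₗ[k] H ⊗[k] H)
    (counit : H →ₗ[k] k) (S : H →ₗ[k] H) : Prop where
  mul_rTensor_comul : ∀ x, lift mul (map S LinearMap.id (comul x)) = counit x • one
  mul_lTensor_comul : ∀ x, lift mul (map LinearMap.id S (comul x)) = counit x • one

namespace IsBialgebra

variable {mul : H →ₗ[k] H →ₗ[k] H} {one : H} {comul : H →ₗ[k] H ⊗[k] H} {counit : H →ₗ[k] k}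

/- The additive group of the ring is the given one, so that `H`'s module structure, `comul`
and `S` are reused unchanged by the Mathlib structures built from it. -/
abbrev toRing (h : IsBialgebra mul one comul counit) : Ring H where
  mul a b := mul a b
  one := one
  left_distrib a b c := (mul a).map_add b c
  right_distrib a b c := mul.map_add₂ a b c
  zero_mul a := mul.map_zero₂ a
  mul_zero a := (mul a).map_zero
  mul_assoc := h.assoc
  one_mul := h.one_mul'
  mul_one := h.mul_one'
  __ := (inferInstance : AddCommGroup H)

abbrev toAlgebra (h : IsBialgebra mul one comul counit) :
    letI := h.toRing; Algebra k H :=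
  letI := h.toRing
  Algebra.ofModule (fun r x y => mul.map_smul₂ r x y) (fun r x y => (mul x).map_smul r y)

abbrev toHopfAlgebra (h : IsBialgebra mul one comul counit) {S : H →ₗ[k] H}
    (hS : IsAntipode mul one comul counit S) :
    letI := h.toRing; letI := h.toAlgebra; HopfAlgebra k H :=
  letI := h.toRing
  letI := h.toAlgebra
  letI : Coalgebra k H :=
    { comul := comul
      counit := counit
      coassoc := by ext c; exact (h.coassoc c).symm
      rTensor_counit_comp_comul := by
        ext c; exact (TensorProduct.lid k H).injective ((h.counit_id c).trans (by simp))
      lTensor_counit_comp_comul := by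
        ext c; exact (TensorProduct.rid k H).injective ((h.id_counit c).trans (by simp)) }
  letI : Bialgebra k H := Bialgebra.mk' k H h.counit_one (h.counit_mul _ _) h.comul_one
    (fun {a b} => (h.comul_mul a b).trans <| by
      congr 2; ext a₁ b₁ a₂ b₂; exact (Algebra.TensorProduct.mul_apply a₁ a₂ b₁ b₂).symm)
  { antipode := S
    mul_antipode_rTensor_comul := by
      ext c; exact (hS.mul_rTensor_comul c).trans (Algebra.algebraMap_eq_smul_one _).symm
    mul_antipode_lTensor_comul := by
      ext c; exact (hS.mul_lTensor_comul c).trans (Algebra.algebraMap_eq_smul_one _).symm }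

theorem antipode_mul_antidistrib (h : IsBialgebra mul one comul counit) {S : H →ₗ[k] H}
    (hS : IsAntipode mul one comul counit S) (a b : H) : S (mul a b) = mul (S b) (S a) :=
  letI := h.toRing
  letI := h.toAlgebra
  letI := h.toHopfAlgebra hS
  HopfAlgebra.antipode_mul_antidistrib (R := k) a b

theorem antipode_one (h : IsBialgebra mul one comul counit) {S : H →ₗ[k] H}
    (hS : IsAntipode mul one comul counit S) : S one = one :=
  letI := h.toRing
  letI := h.toAlgebra
  letI := h.toHopfAlgebra hS
  HopfAlgebra.antipode_one (R := k)

end IsBialgebra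

def untwistMul (mul : H →ₗ[k] H →ₗ[k] H) (alpha : H ≃ₗ[k] H) : H →ₗ[k] H →ₗ[k] H :=
  mul.compr₂ alpha.symm.toLinearMap

def untwistComul (comul : H →ₗ[k] H ⊗[k] H) (alpha : H ≃ₗ[k] H) : H →ₗ[k] H ⊗[k] H :=
  comul ∘ₗ alpha.symm.toLinearMap

theorem commute_symm_of_commute {f : H →ₗ[k] H} {e : H ≃ₗ[k] H} (hf : Function.Commute f e) :
    Function.Commute f e.symm :=
  hf.inverses_right e.apply_symm_apply e.symm_apply_apply

theorem map_mulT_of_map_mul {mul : H →ₗ[k] H →ₗ[k] H} {f : H →ₗ[k] H}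
    (hf : ∀ a b, f (mul a b) = mul (f a) (f b)) (x y : H ⊗[k] H) :
    map f f (mulT mul x y) = mulT mul (map f f x) (map f f y) := by
  have : (mulT mul).compr₂ (map f f) = (mulT mul).compl₁₂ (map f f) (map f f) := by
    ext; simp [mulT, pairMap, hf]
  exact LinearMap.congr_fun₂ this x y

theorem mulT_compr₂ (mul : H →ₗ[k] H →ₗ[k] H) (f : H →ₗ[k] H) (x y : H ⊗[k] H) :
    mulT (mul.compr₂ f) x y = map f f (mulT mul x y) := by
  have : mulT (mul.compr₂ f) = (mulT mul).compr₂ (map f f) := by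
    ext; simp [mulT, pairMap]
  exact LinearMap.congr_fun₂ this x y

namespace IsHomBialgebra

variable {mul : H →ₗ[k] H →ₗ[k] H} {one : H} {alpha : H ≃ₗ[k] H}
  {comul : H →ₗ[k] H ⊗[k] H} {counit : H →ₗ[k] k}

theorem symm_mul (h : IsHomBialgebra mul one alpha comul counit) (a b : H) :
    alpha.symm (mul a b) = mul (alpha.symm a) (alpha.symm b) :=
  alpha.symm_apply_eq.mpr <| by simp [h.alpha_mul]

theorem symm_one (h : IsHomBialgebra mul one alpha comul counit) : alpha.symm one = one :=
  alpha.symm_apply_eq.mpr h.alpha_one.symm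

theorem comul_symm (h : IsHomBialgebra mul one alpha comul counit) (c : H) :
    comul (alpha.symm c) = map alpha.symm.toLinearMap alpha.symm.toLinearMap (comul c) := by
  conv_rhs => rw [← alpha.apply_symm_apply c, h.comul_alpha, map_map]
  simp

theorem untwistComul_eq (h : IsHomBialgebra mul one alpha comul counit) :
    untwistComul comul alpha = map alpha.symm.toLinearMap alpha.symm.toLinearMap ∘ₗ comul :=
  LinearMap.ext h.comul_symm

theorem counit_symm (h : IsHomBialgebra mul one alpha comul counit) (c : H) :
    counit (alpha.symm c) = counit c := by
  rw [← h.counit_alpha, alpha.apply_symm_apply]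

theorem symm_mul_mul_eq_mul_symm_mul (h : IsHomBialgebra mul one alpha comul counit)
    (a b c : H) : mul (alpha.symm (mul a b)) c = mul a (alpha.symm (mul b c)) := by
  conv_lhs => rw [← alpha.symm_apply_apply c]
  rw [← h.symm_mul, ← h.hom_assoc, h.symm_mul, alpha.symm_apply_apply]

theorem isBialgebra_untwist (h : IsHomBialgebra mul one alpha comul counit) :
    IsBialgebra (untwistMul mul alpha) one (untwistComul comul alpha) counit where
  assoc a b c := by
    simp only [untwistMul, LinearMap.compr₂_apply, LinearEquiv.coe_coe]
    rw [h.symm_mul_mul_eq_mul_symm_mul]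
  one_mul' a := by simp [untwistMul, h.one_mul']
  mul_one' a := by simp [untwistMul, h.mul_one']
  coassoc c := by
    set β := alpha.symm.toLinearMap
    have hΔ : untwistComul comul alpha = map β β ∘ₗ comul := h.untwistComul_eq
    have hΔβ : untwistComul comul alpha ∘ₗ β = map (β ∘ₗ β) (β ∘ₗ β) ∘ₗ comul := by
      ext; simp [β, untwistComul, h.comul_symm, map_map]
    have hβ : β = (β ∘ₗ β) ∘ₗ alpha.toLinearMap := by ext; simp [β]
    -- both sides are `β² ⊗ β² ⊗ β²` applied to the two sides of Hom-coassociativity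
    calc map LinearMap.id (untwistComul comul alpha) (untwistComul comul alpha c)
        = map (β ∘ₗ β) (map (β ∘ₗ β) (β ∘ₗ β)) (map alpha.toLinearMap comul (comul c)) := by
          rw [hΔ, LinearMap.comp_apply, map_map, map_map, LinearMap.id_comp, ← hΔ, hΔβ, ← hβ]
      _ = map (β ∘ₗ β) (map (β ∘ₗ β) (β ∘ₗ β))
            (TensorProduct.assoc k H H H (map comul alpha.toLinearMap (comul c))) := by
          rw [h.hom_coassoc]
      _ = TensorProduct.assoc k H H H
            (map (untwistComul comul alpha) LinearMap.id (untwistComul comul alpha c)) := by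
          rw [map_map_assoc, map_map, ← hβ, hΔ, LinearMap.comp_apply, map_map, ← hΔ, hΔβ,
            LinearMap.id_comp]
  counit_id c := (h.counit_id (alpha.symm c)).trans (alpha.apply_symm_apply c)
  id_counit c := (h.id_counit (alpha.symm c)).trans (alpha.apply_symm_apply c)
  comul_mul a b := by
    simp only [untwistComul, untwistMul, LinearMap.comp_apply, LinearMap.compr₂_apply,
      LinearEquiv.coe_coe]
    simp only [mulT_compr₂, h.comul_symm, h.comul_mul, map_mulT_of_map_mul h.symm_mul]
  comul_one := by simp [untwistComul, h.symm_one, h.comul_one]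
  counit_mul a b := by simp [untwistMul, h.counit_symm, h.counit_mul]
  counit_one := h.counit_one

theorem lift_map_symm (h : IsHomBialgebra mul one alpha comul counit) (t : H ⊗[k] H) :
    lift mul (map alpha.symm.toLinearMap alpha.symm.toLinearMap t) = alpha.symm (lift mul t) := by
  have : lift mul ∘ₗ map alpha.symm.toLinearMap alpha.symm.toLinearMap
      = alpha.symm.toLinearMap ∘ₗ lift mul := by
    ext; simp [h.symm_mul]
  exact LinearMap.congr_fun this t

theorem lift_untwistMul_map_untwistComul (h : IsHomBialgebra mul one alpha comul counit)
    {f g : H →ₗ[k] H} (hf : Function.Commute f alpha) (hg : Function.Commute g alpha)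
    {x : H} {r : k} (hx : lift mul (map f g (comul x)) = r • one) :
    lift (untwistMul mul alpha) (map f g (untwistComul comul alpha x)) = r • one := by
  have hf' : f ∘ₗ alpha.symm.toLinearMap = alpha.symm.toLinearMap ∘ₗ f :=
    LinearMap.ext (commute_symm_of_commute hf)
  have hg' : g ∘ₗ alpha.symm.toLinearMap = alpha.symm.toLinearMap ∘ₗ g :=
    LinearMap.ext (commute_symm_of_commute hg)
  calc lift (untwistMul mul alpha) (map f g (untwistComul comul alpha x))
      = alpha.symm (lift mul (map f g
          (map alpha.symm.toLinearMap alpha.symm.toLinearMap (comul x)))) := by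
        rw [untwistMul, lift_compr₂, h.untwistComul_eq]
        rfl
    _ = alpha.symm (lift mul (map alpha.symm.toLinearMap alpha.symm.toLinearMap
          (map f g (comul x)))) := by
        rw [map_map, map_map, hf', hg']
    _ = r • one := by rw [h.lift_map_symm, hx, map_smul, map_smul, h.symm_one, h.symm_one]

theorem isAntipode_untwist (h : IsHomBialgebra mul one alpha comul counit) {S : H →ₗ[k] H}
    (hS : IsAntipode mul one comul counit S) (hSα : Function.Commute S alpha) :
    IsAntipode (untwistMul mul alpha) one (untwistComul comul alpha) counit S where
  mul_rTensor_comul x := h.lift_untwistMul_map_untwistComul (g := LinearMap.id) hSα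
    (fun _ => rfl) (hS.mul_rTensor_comul x)
  mul_lTensor_comul x := h.lift_untwistMul_map_untwistComul (f := LinearMap.id)
    (fun _ => rfl) hSα (hS.mul_lTensor_comul x)

end IsHomBialgebra

end

/-- The antipode of a Hom-Hopf algebra (with invertible structure
map `α`) is anti-multiplicative and preserves the unit. -/
theorem hom_hopf_antipode_anti_mul
    {k H : Type*} [CommRing k] [AddCommGroup H] [Module k H]
    (mul : H →ₗ[k] H →ₗ[k] H) (one : H) (alpha : H ≃ₗ[k] H)
    (comul : H →ₗ[k] H ⊗[k] H) (counit : H →ₗ[k] k) (S : H →ₗ[k] H)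
    (hH : IsHomBialgebra mul one alpha comul counit)
    (hS₁ : ∀ x, TensorProduct.lift mul
        (TensorProduct.map S LinearMap.id (comul x)) = counit x • one)
    (hS₂ : ∀ x, TensorProduct.lift mul
        (TensorProduct.map LinearMap.id S (comul x)) = counit x • one)
    (hSα : ∀ x, S (alpha x) = alpha (S x)) :
    (∀ a b, S (mul a b) = mul (S b) (S a)) ∧ S one = one := by
  have hB := hH.isBialgebra_untwist
  have hS := hH.isAntipode_untwist ⟨hS₁, hS₂⟩ hSα
  refine ⟨fun a b => alpha.symm.injective ?_, hB.antipode_one hS⟩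
  have hSβ : ∀ x, S (alpha.symm x) = alpha.symm (S x) := commute_symm_of_commute hSα
  simpa [untwistMul, hSβ] using hB.antipode_mul_antidistrib hS a b

end HomTwist
end
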